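/- For every connected n-vertex graph G with n ≥ 2, avm(G) ≥ avm(S_n) = (n-1)/n, with equality only if G is the star S_n. -/

import Mathlib

open Finset Polynomial

namespace AvgMatching

variable {V : Type*} [Fintype V] [DecidableEq V]

/-- A matching of `G`, viewed as a finite set of edges of `G`
no two of which share a vertex. -/
def IsMatchingSet (G : SimpleGraph V) (A : Finset (Sym2 V)) : Prop :=
  ↑A ⊆ G.edgeSet ∧ (A : Set (Sym2 V)).Pairwise fun e f => ∀ v : V, v ∈ e → v ∉ f

open Classical in
/-- The finite set of all matchings of `G` (including the empty matching). -/
noncomputable def matchings (G : SimpleGraph V) : Finset (Finset (Sym2 V)) :=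
  Finset.univ.filter (IsMatchingSet G)

/-- `M(G)`: the number of matchings of `G` (including the empty one). -/
noncomputable def numM (G : SimpleGraph V) : ℕ := (matchings G).card

/-- `S(G)`: the sum of the sizes of all matchings of `G`. -/
noncomputable def totS (G : SimpleGraph V) : ℕ := ∑ A ∈ matchings G, A.card

/-- `avm(G) = S(G)/M(G)`: the average size of a matching of `G`. -/
noncomputable def avm (G : SimpleGraph V) : ℚ := (totS G : ℚ) / (numM G)

/-- `m(G,k)`: the number of matchings of size `k` in `G`. -/
noncomputable def mCount (G : SimpleGraph V) (k : ℕ) : ℕ :=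
  ((matchings G).filter fun A => A.card = k).card

/-- `μ(G)`: the matching number of `G`. -/
noncomputable def matchNum (G : SimpleGraph V) : ℕ := (matchings G).sup Finset.card

/-- Delete a vertex `u` (keeping it as an isolated vertex, which does not
affect matchings): all edges incident to `u` are removed. -/
def delVert (G : SimpleGraph V) (u : V) : SimpleGraph V :=
  G.deleteEdges {e : Sym2 V | u ∈ e}

/-- The star on `n` vertices: vertex `0` is joined to all other vertices. -/
def starGraph (n : ℕ) : SimpleGraph (Fin n) where
  Adj a b := a ≠ b ∧ (a.val = 0 ∨ b.val = 0)
  symm := ⟨by rintro a b ⟨h1, h2⟩; exact ⟨h1.symm, h2.symm⟩⟩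
  loopless := ⟨by rintro a ⟨h, _⟩; exact h rfl⟩

open Classical

lemma mem_matchings_iff {G : SimpleGraph V} {A : Finset (Sym2 V)} :
    A ∈ matchings G ↔ IsMatchingSet G A := by
  simp [matchings]

lemma empty_mem_matchings (G : SimpleGraph V) : ∅ ∈ matchings G := by
  rw [mem_matchings_iff]
  exact ⟨by simp, by simp⟩

lemma singleton_mem_matchings {G : SimpleGraph V} {e : Sym2 V} (he : e ∈ G.edgeSet) :
    ({e} : Finset (Sym2 V)) ∈ matchings G := by
  rw [mem_matchings_iff]
  refine ⟨by simpa using he, ?_⟩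
  simp [Set.pairwise_singleton]

lemma pair_mem_matchings {G : SimpleGraph V} {e f : Sym2 V} (he : e ∈ G.edgeSet)
    (hf : f ∈ G.edgeSet) (hd : ∀ v : V, v ∈ e → v ∉ f) :
    ({e, f} : Finset (Sym2 V)) ∈ matchings G := by
  rw [mem_matchings_iff]
  constructor
  · intro x hx
    simp only [Finset.coe_insert, Finset.coe_singleton, Set.mem_insert_iff,
      Set.mem_singleton_iff] at hx
    rcases hx with rfl | rfl <;> assumption
  · intro x hx y hy hxy
    simp only [Finset.coe_insert, Finset.coe_singleton, Set.mem_insert_iff,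
      Set.mem_singleton_iff] at hx hy
    rcases hx with rfl | rfl <;> rcases hy with rfl | rfl
    · exact absurd rfl hxy
    · exact hd
    · intro v hv hv'; exact hd v hv' hv
    · exact absurd rfl hxy

lemma matchings_eq_of_forall_mem {G : SimpleGraph V} {v : V}
    (hv : ∀ e ∈ G.edgeSet, v ∈ e) :
    matchings G = insert ∅ (G.edgeFinset.image fun e => ({e} : Finset (Sym2 V))) := by
  ext A
  simp only [Finset.mem_insert, Finset.mem_image, SimpleGraph.mem_edgeFinset]
  constructor
  · intro hA
    rw [mem_matchings_iff] at hA
    obtain ⟨hsub, hpw⟩ := hA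
    by_cases h0 : A = ∅
    · exact Or.inl h0
    · right
      obtain ⟨e, he⟩ := Finset.nonempty_iff_ne_empty.mpr h0
      refine ⟨e, hsub he, ?_⟩
      symm
      rw [Finset.eq_singleton_iff_unique_mem]
      refine ⟨he, fun f hf => ?_⟩
      by_contra hfe
      exact hpw (by exact_mod_cast hf) (by exact_mod_cast he) hfe v
        (hv f (hsub hf)) (hv e (hsub he))
  · rintro (rfl | ⟨e, he, rfl⟩)
    · exact empty_mem_matchings G
    · exact singleton_mem_matchings he

lemma empty_not_mem_image_singleton (s : Finset (Sym2 V)) :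
    (∅ : Finset (Sym2 V)) ∉ s.image fun e => ({e} : Finset (Sym2 V)) := by
  simp only [Finset.mem_image, not_exists, not_and]
  intro e _
  exact fun h => Finset.singleton_ne_empty e h

lemma numM_of_forall_mem {G : SimpleGraph V} {v : V} (hv : ∀ e ∈ G.edgeSet, v ∈ e) :
    numM G = G.edgeFinset.card + 1 := by
  rw [numM, matchings_eq_of_forall_mem hv,
    Finset.card_insert_of_notMem (empty_not_mem_image_singleton _),
    Finset.card_image_of_injective _ fun a b h => by simpa using h]

lemma totS_of_forall_mem {G : SimpleGraph V} {v : V} (hv : ∀ e ∈ G.edgeSet, v ∈ e) :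
    totS G = G.edgeFinset.card := by
  rw [totS, matchings_eq_of_forall_mem hv,
    Finset.sum_insert (empty_not_mem_image_singleton _),
    Finset.sum_image (fun a _ b _ h => by simpa using h)]
  simp

lemma star_zero_mem {n : ℕ} (hn : 2 ≤ n) : ∀ e ∈ (starGraph n).edgeSet,
    (⟨0, by omega⟩ : Fin n) ∈ e := by
  intro e
  induction e using Sym2.ind with
  | _ a b =>
    intro he
    rw [SimpleGraph.mem_edgeSet] at he
    obtain ⟨hne, h0 | h0⟩ := he
    · exact Sym2.mem_iff.mpr (Or.inl (Fin.ext (by simpa using h0) : a = _).symm)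
    · exact Sym2.mem_iff.mpr (Or.inr (Fin.ext (by simpa using h0) : b = _).symm)

lemma star_edgeFinset {n : ℕ} (hn : 2 ≤ n) :
    (starGraph n).edgeFinset =
      (Finset.univ.erase (⟨0, by omega⟩ : Fin n)).image
        (fun i => s((⟨0, by omega⟩ : Fin n), i)) := by
  ext e
  simp only [SimpleGraph.mem_edgeFinset, Finset.mem_image, Finset.mem_erase,
    Finset.mem_univ, and_true]
  constructor
  · intro he
    induction e using Sym2.ind with
    | _ a b =>
      rw [SimpleGraph.mem_edgeSet] at he
      obtain ⟨hne, h0 | h0⟩ := he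
      · have ha : a = (⟨0, by omega⟩ : Fin n) := Fin.ext (by simpa using h0)
        exact ⟨b, fun h => hne (ha.trans h.symm), by rw [ha]⟩
      · have hb : b = (⟨0, by omega⟩ : Fin n) := Fin.ext (by simpa using h0)
        exact ⟨a, fun h => hne (h.trans hb.symm), by rw [hb]; exact Sym2.eq_swap⟩
  · rintro ⟨i, hi, rfl⟩
    rw [SimpleGraph.mem_edgeSet]
    exact ⟨fun h => hi h.symm, Or.inl rfl⟩

lemma star_card_edgeFinset {n : ℕ} (hn : 2 ≤ n) :
    (starGraph n).edgeFinset.card = n - 1 := by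
  rw [star_edgeFinset hn, Finset.card_image_of_injective _
    (fun a b h => Sym2.congr_right.mp h),
    Finset.card_erase_of_mem (Finset.mem_univ _), Finset.card_univ, Fintype.card_fin]

lemma card_edgeFinset_of_connected {G : SimpleGraph V} (hconn : G.Connected) :
    Fintype.card V - 1 ≤ G.edgeFinset.card := by
  obtain ⟨r⟩ := hconn.nonempty
  have key : ∀ w : V, w ≠ r → ∃ u, G.Adj w u ∧ G.dist u r < G.dist w r := by
    intro w hw
    have hpos : 0 < G.dist w r := hconn.pos_dist_of_ne hw
    obtain ⟨p, hp⟩ := SimpleGraph.exists_walk_of_dist_ne_zero hpos.ne'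
    cases p with
    | nil => exact absurd rfl hw
    | cons h q =>
      refine ⟨_, h, ?_⟩
      have h1 := SimpleGraph.dist_le q
      have h2 : q.length + 1 = G.dist w r := by simpa using hp
      omega
  choose nxt hadj hlt using key
  have hcard : (Finset.univ.erase r).card ≤ G.edgeFinset.card := by
    refine Finset.card_le_card_of_injOn
      (fun w => if h : w ≠ r then s(w, nxt w h) else s(w, w)) ?_ ?_
    · intro w hw
      rw [Finset.mem_coe, Finset.mem_erase] at hw
      simp only [ne_eq, dif_pos hw.1, Finset.mem_coe, SimpleGraph.mem_edgeFinset, SimpleGraph.mem_edgeSet]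
      exact hadj w hw.1
    · intro w hw w' hw' heq
      rw [Finset.mem_coe, Finset.mem_erase] at hw hw'
      simp only [ne_eq, dif_pos hw.1, dif_pos hw'.1, Sym2.eq_iff] at heq
      rcases heq with ⟨h1, _⟩ | ⟨h1, h2⟩
      · exact h1
      · exfalso
        have l1 := hlt w hw.1
        have l2 := hlt w' hw'.1
        rw [h2] at l1
        rw [← h1] at l2
        omega
  rwa [Finset.card_erase_of_mem (Finset.mem_univ _), Finset.card_univ] at hcard

lemma matchings_filter_le_one (G : SimpleGraph V) :
    (matchings G).filter (fun A => A.card ≤ 1)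
      = insert ∅ (G.edgeFinset.image fun e => ({e} : Finset (Sym2 V))) := by
  ext A
  simp only [Finset.mem_filter, Finset.mem_insert, Finset.mem_image,
    SimpleGraph.mem_edgeFinset]
  constructor
  · rintro ⟨hA, hc⟩
    rcases Nat.le_one_iff_eq_zero_or_eq_one.mp hc with h | h
    · exact Or.inl (Finset.card_eq_zero.mp h)
    · obtain ⟨e, rfl⟩ := Finset.card_eq_one.mp h
      exact Or.inr ⟨e, (mem_matchings_iff.mp hA).1 (by simp), rfl⟩
  · rintro (rfl | ⟨e, he, rfl⟩)
    · exact ⟨empty_mem_matchings G, by simp⟩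
    · exact ⟨singleton_mem_matchings he, by simp⟩

lemma key_sum (G : SimpleGraph V) (n : ℕ) :
    ∃ R : ℚ, 0 ≤ R ∧ (R = 0 → ∀ A ∈ matchings G, A.card ≤ 1) ∧
      (n : ℚ) * totS G - ((n : ℚ) - 1) * numM G
        = ((G.edgeFinset.card : ℚ) - ((n : ℚ) - 1)) + R := by
  classical
  set f : Finset (Sym2 V) → ℚ := fun A => (n : ℚ) * A.card - ((n : ℚ) - 1) with hf
  have hterm : ∀ A ∈ (matchings G).filter (fun A => ¬ A.card ≤ 1), 0 < f A := by
    intro A hA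
    rw [Finset.mem_filter] at hA
    have h2 : (2 : ℚ) ≤ A.card := by exact_mod_cast (by omega : 2 ≤ A.card)
    have hn0 : (0 : ℚ) ≤ n := Nat.cast_nonneg n
    simp only [hf]
    nlinarith
  refine ⟨∑ A ∈ (matchings G).filter (fun A => ¬ A.card ≤ 1), f A, ?_, ?_, ?_⟩
  · exact Finset.sum_nonneg fun A hA => (hterm A hA).le
  · intro hR A hA
    by_contra hc
    have hmem : A ∈ (matchings G).filter (fun A => ¬ A.card ≤ 1) :=
      Finset.mem_filter.mpr ⟨hA, hc⟩
    have := (Finset.sum_eq_zero_iff_of_nonneg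
      (fun B hB => (hterm B hB).le)).mp hR A hmem
    exact absurd this (hterm A hmem).ne'
  · have hsplit := Finset.sum_filter_add_sum_filter_not (matchings G)
      (fun A => A.card ≤ 1) f
    have hall : ∑ A ∈ matchings G, f A
        = (n : ℚ) * totS G - ((n : ℚ) - 1) * numM G := by
      rw [Finset.sum_sub_distrib, Finset.sum_const, nsmul_eq_mul, ← Finset.mul_sum]
      have h1 : ((totS G : ℚ)) = ∑ A ∈ matchings G, (A.card : ℚ) := by
        rw [totS]; push_cast; rfl
      rw [h1, numM]
      ring
    have hfil : ∑ A ∈ (matchings G).filter (fun A => A.card ≤ 1), f A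
        = (G.edgeFinset.card : ℚ) - ((n : ℚ) - 1) := by
      rw [matchings_filter_le_one, Finset.sum_insert (empty_not_mem_image_singleton _),
        Finset.sum_image (fun a _ b _ h => by simpa using h)]
      simp only [hf, Finset.card_empty, Finset.card_singleton, Nat.cast_zero,
        Nat.cast_one, Finset.sum_const, nsmul_eq_mul]
      ring
    rw [← hall, ← hsplit, hfil]


theorem star_minimizes_avm (n : ℕ) (hn : 2 ≤ n) (G : SimpleGraph V)
    (hcard : Fintype.card V = n) (hconn : G.Connected) :
    avm (starGraph n) = ((n : ℚ) - 1) / n ∧ avm (starGraph n) ≤ avm G ∧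
      (avm G = avm (starGraph n) → Nonempty (G ≃g starGraph n)) := by
  classical
  have hn1 : 1 ≤ n := by omega
  -- avm of the star
  have havmstar : avm (starGraph n) = ((n : ℚ) - 1) / n := by
    rw [avm, numM_of_forall_mem (star_zero_mem hn), totS_of_forall_mem (star_zero_mem hn),
      star_card_edgeFinset hn]
    have h1 : ((n - 1 : ℕ) : ℚ) = (n : ℚ) - 1 := by
      push_cast [Nat.cast_sub hn1]; ring
    have h2 : n - 1 + 1 = n := by omega
    rw [h2, h1]
  have hM : 0 < numM G := Finset.card_pos.mpr ⟨∅, empty_mem_matchings G⟩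
  have hMq : (0 : ℚ) < numM G := by exact_mod_cast hM
  have hnq : (0 : ℚ) < n := by exact_mod_cast (by omega : 0 < n)
  obtain ⟨R, hR0, hRempty, hKey⟩ := key_sum G n
  have hEnat : n - 1 ≤ G.edgeFinset.card := by
    have := card_edgeFinset_of_connected hconn
    omega
  have hE : (n : ℚ) - 1 ≤ (G.edgeFinset.card : ℚ) := by
    have : ((n - 1 : ℕ) : ℚ) ≤ (G.edgeFinset.card : ℚ) := by exact_mod_cast hEnat
    rw [Nat.cast_sub hn1] at this
    simpa using this
  refine ⟨havmstar, ?_, ?_⟩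
  · -- the inequality
    rw [havmstar, avm, div_le_div_iff₀ hnq hMq]
    nlinarith
  · -- the equality case
    intro heq
    rw [havmstar, avm] at heq
    have hSM : (totS G : ℚ) * n = ((n : ℚ) - 1) * numM G :=
      (div_eq_div_iff hMq.ne' hnq.ne').mp heq
    have hRz : R = 0 := by nlinarith
    have hEeq : (G.edgeFinset.card : ℚ) = (n : ℚ) - 1 := by nlinarith
    have hEnat' : G.edgeFinset.card = n - 1 := by
      have : (G.edgeFinset.card : ℚ) = ((n - 1 : ℕ) : ℚ) := by
        rw [hEeq, Nat.cast_sub hn1]; push_cast; ring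
      exact_mod_cast this
    have hle1 := hRempty hRz
    -- every vertex has a neighbour
    have hnbr : ∀ w : V, ∃ u, G.Adj w u := by
      intro w
      obtain ⟨x, hx⟩ := Fintype.exists_ne_of_one_lt_card (by omega) w
      obtain ⟨p⟩ := hconn w x
      cases p with
      | nil => exact absurd rfl hx
      | cons h q => exact ⟨_, h⟩
    -- any two edges meet
    have hmeet : ∀ a b : V, G.Adj a b → ∀ f ∈ G.edgeSet, a ∈ f ∨ b ∈ f := by
      intro a b hab f hf
      by_contra hno
      push_neg at hno
      have hd : ∀ w : V, w ∈ (s(a, b) : Sym2 V) → w ∉ f := by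
        intro w hw
        rw [Sym2.mem_iff] at hw
        rcases hw with rfl | rfl
        · exact hno.1
        · exact hno.2
      have hpair := pair_mem_matchings ((G.mem_edgeSet).mpr hab) hf hd
      have hne : (s(a, b) : Sym2 V) ≠ f := by
        intro h
        exact hno.1 (h ▸ Sym2.mem_mk_left a b)
      have := hle1 _ hpair
      rw [Finset.card_pair hne] at this
      omega
    -- a common vertex of all edges
    obtain ⟨a, b, hab⟩ : ∃ a b, G.Adj a b := by
      obtain ⟨r⟩ := hconn.nonempty
      obtain ⟨u, h⟩ := hnbr r
      exact ⟨r, u, h⟩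
    have hcom : ∃ v : V, ∀ e ∈ G.edgeSet, v ∈ e := by
      by_cases ha : ∀ e ∈ G.edgeSet, a ∈ e
      · exact ⟨a, ha⟩
      · push_neg at ha
        obtain ⟨f, hf, haf⟩ := ha
        have hbf : b ∈ f := (hmeet a b hab f hf).resolve_left haf
        obtain ⟨c, rfl⟩ := Sym2.mem_iff_exists.mp hbf
        have hbc : G.Adj b c := (G.mem_edgeSet).mp hf
        have hca : c ≠ a := fun h => haf (Sym2.mem_iff.mpr (Or.inr h.symm))
        have hcb : c ≠ b := hbc.ne'
        have hba : b ≠ a := hab.ne'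
        refine ⟨b, ?_⟩
        intro g hg
        by_contra hbg
        have hag : a ∈ g := (hmeet a b hab g hg).resolve_right hbg
        obtain ⟨d, rfl⟩ := Sym2.mem_iff_exists.mp hag
        have had : G.Adj a d := (G.mem_edgeSet).mp hg
        have hdb : d ≠ b := fun h => hbg (Sym2.mem_iff.mpr (Or.inr h.symm))
        have hcg : c ∈ (s(a, d) : Sym2 V) := by
          rcases hmeet b c hbc _ hg with h | h
          · exact absurd h hbg
          · exact h
        have hcd : c = d := (Sym2.mem_iff.mp hcg).resolve_left hca
        subst hcd
        -- triangle a b c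
        have hac : G.Adj a c := had
        by_cases h4 : ∃ x : V, x ≠ a ∧ x ≠ b ∧ x ≠ c
        · obtain ⟨x, hxa, hxb, hxc⟩ := h4
          obtain ⟨y, hxy⟩ := hnbr x
          have hx1 : x ∉ (s(a, b) : Sym2 V) := by
            rw [Sym2.mem_iff]; rintro (rfl | rfl) <;> simp_all
          have hx2 : x ∉ (s(b, c) : Sym2 V) := by
            rw [Sym2.mem_iff]; rintro (rfl | rfl) <;> simp_all
          have hx3 : x ∉ (s(a, c) : Sym2 V) := by
            rw [Sym2.mem_iff]; rintro (rfl | rfl) <;> simp_all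
          have hy1 := (hmeet x y hxy _ ((G.mem_edgeSet).mpr hab)).resolve_left hx1
          have hy2 := (hmeet x y hxy _ ((G.mem_edgeSet).mpr hbc)).resolve_left hx2
          have hy3 := (hmeet x y hxy _ ((G.mem_edgeSet).mpr hac)).resolve_left hx3
          rw [Sym2.mem_iff] at hy1 hy2 hy3
          rcases hy1 with rfl | rfl <;> rcases hy2 with h | h <;> simp_all
        · push_neg at h4
          have hsub : (Finset.univ : Finset V) ⊆ {a, b, c} := by
            intro x _
            simp only [Finset.mem_insert, Finset.mem_singleton]
            by_cases h1 : x = a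
            · exact Or.inl h1
            · by_cases h2 : x = b
              · exact Or.inr (Or.inl h2)
              · exact Or.inr (Or.inr (h4 x h1 h2))
          have hn3 : n ≤ 3 := by
            have h1 := Finset.card_le_card hsub
            have h2 : ({a, b, c} : Finset V).card ≤ 3 :=
              (Finset.card_insert_le _ _).trans
                (by have := Finset.card_insert_le b ({c} : Finset V); rw [Finset.card_singleton] at this; omega)
            rw [Finset.card_univ, hcard] at h1
            omega
          have hsube : ({s(a, b), s(b, c), s(a, c)} : Finset (Sym2 V)) ⊆ G.edgeFinset := by
            intro e he
            simp only [Finset.mem_insert, Finset.mem_singleton] at he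
            rcases he with rfl | rfl | rfl <;>
              rw [SimpleGraph.mem_edgeFinset, SimpleGraph.mem_edgeSet] <;> assumption
          have hnab : a ≠ b := hab.ne
          have e1 : (s(a, b) : Sym2 V) ≠ s(b, c) := fun h => by
            rcases Sym2.eq_iff.mp h with ⟨h1, h2⟩ | ⟨h1, h2⟩
            · exact hnab h1
            · exact hca h1.symm
          have e2 : (s(a, b) : Sym2 V) ≠ s(a, c) := fun h => by
            rcases Sym2.eq_iff.mp h with ⟨h1, h2⟩ | ⟨h1, h2⟩
            · exact hcb h2.symm
            · exact hca h1.symm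
          have e3 : (s(b, c) : Sym2 V) ≠ s(a, c) := fun h => by
            rcases Sym2.eq_iff.mp h with ⟨h1, h2⟩ | ⟨h1, h2⟩
            · exact hba h1
            · exact hcb h1.symm
          have hc3 : ({s(a, b), s(b, c), s(a, c)} : Finset (Sym2 V)).card = 3 := by
            rw [Finset.card_insert_of_notMem (by simp [e1, e2]),
              Finset.card_insert_of_notMem (by simp [e3]), Finset.card_singleton]
          have := Finset.card_le_card hsube
          rw [hc3, hEnat'] at this
          omega
    obtain ⟨v, hv⟩ := hcom
    -- G is the star with centre v
    have hadj_iff : ∀ x y : V, G.Adj x y ↔ x ≠ y ∧ (x = v ∨ y = v) := by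
      intro x y
      constructor
      · intro h
        refine ⟨h.ne, ?_⟩
        have := hv _ ((G.mem_edgeSet).mpr h)
        rw [Sym2.mem_iff] at this
        rcases this with h' | h'
        · exact Or.inl h'.symm
        · exact Or.inr h'.symm
      · rintro ⟨hne, hx | hy⟩
        · obtain ⟨u, hu⟩ := hnbr y
          have hm := hv _ ((G.mem_edgeSet).mpr hu)
          rw [Sym2.mem_iff] at hm
          rcases hm with h' | h'
          · exact absurd (hx.trans h') hne
          · have hyv : G.Adj y v := by rw [h']; exact hu
            rw [hx]
            exact hyv.symm
        · obtain ⟨u, hu⟩ := hnbr x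
          have hm := hv _ ((G.mem_edgeSet).mpr hu)
          rw [Sym2.mem_iff] at hm
          rcases hm with h' | h'
          · exact absurd (h'.symm.trans hy.symm) hne
          · have hxv : G.Adj x v := by rw [h']; exact hu
            rw [hy]
            exact hxv
    -- build the isomorphism
    haveI : NeZero n := ⟨by omega⟩
    let φ := Fintype.equivFinOfCardEq hcard
    let ψ := φ.trans (Equiv.swap (φ v) (0 : Fin n))
    have hψv : ψ v = 0 := by simp [ψ, Equiv.swap_apply_left]
    have h0 : ∀ x : V, ψ x = 0 ↔ x = v := by
      intro x
      rw [← hψv]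
      exact ⟨fun h => ψ.injective h, fun h => h ▸ rfl⟩
    refine ⟨⟨ψ, @fun x y => ?_⟩⟩
    show ψ x ≠ ψ y ∧ ((ψ x).val = 0 ∨ (ψ y).val = 0) ↔ G.Adj x y
    rw [hadj_iff]
    have hval : ∀ x : V, (ψ x).val = 0 ↔ x = v := by
      intro x
      rw [← h0 x, Fin.ext_iff, Fin.val_zero]
    rw [hval, hval, ne_eq, EmbeddingLike.apply_eq_iff_eq]


end AvgMatching
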